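/- arXiv:2601.17881 — 10 statements merged into one kernel-verified Lean document; each statement's English description precedes it below -/
import Mathlib

section
/- For any triangle with side lengths a, b, c (positive reals satisfying the triangle inequality), there exists a unique real u with 0 < u < min(a, b, c) such that u^3 = (a-u)(b-u)(c-u). -/
/-!
On `[0, m]` with `m = min a (min b c)` all three factors `a - u`, `b - u`, `c - u` are
nonnegative and decreasing, so `u ^ 3 - (a - u) * (b - u) * (c - u)` is strictly increasing there.
It is `-abc < 0` at `0` and `m ^ 3 > 0` at `m`, hence it has exactly one zero in `(0, m)`.
-/

theorem sub_min_mul_sub_min_mul_sub_min {R : Type*} [CommRing R] [LinearOrder R] (a b c : R) :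
    (a - min a (min b c)) * (b - min a (min b c)) * (c - min a (min b c)) = 0 := by
  rcases min_choice a (min b c) with h | h <;> rw [h]
  · simp
  · rcases min_choice b c with h' | h' <;> simp [h']

section OrderedRing

variable {R : Type*} [CommRing R] [LinearOrder R] [IsStrictOrderedRing R]

theorem sub_mul_sub_mul_sub_strictAntiOn (a b c : R) :
    StrictAntiOn (fun u => (a - u) * (b - u) * (c - u)) (Set.Iic (min a (min b c))) := by
  intro u hu v hv huv
  simp only [Set.mem_Iic, le_min_iff] at hu hv
  have hv' : 0 ≤ a - v ∧ 0 ≤ b - v ∧ 0 ≤ c - v := by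
    refine ⟨?_, ?_, ?_⟩ <;> linarith
  exact mul_lt_mul'' (mul_lt_mul'' (by linarith) (by linarith) hv'.1 hv'.2.1) (by linarith)
    (mul_nonneg hv'.1 hv'.2.1) hv'.2.2

theorem pow_three_sub_sub_mul_sub_mul_sub_strictMonoOn (a b c : R) :
    StrictMonoOn (fun u => u ^ 3 - (a - u) * (b - u) * (c - u)) (Set.Iic (min a (min b c))) :=
  fun _ hu _ hv huv =>
    sub_lt_sub ((Odd.strictMono_pow (by decide)) huv)
      (sub_mul_sub_mul_sub_strictAntiOn a b c hu hv huv)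

end OrderedRing

theorem yff_parameter_exists_unique_general (a b c : ℝ)
    (ha : 0 < a) (hb : 0 < b) (hc : 0 < c) :
    ∃! u : ℝ, 0 < u ∧ u < min a (min b c) ∧
      u ^ 3 = (a - u) * (b - u) * (c - u) := by
  set m := min a (min b c)
  set f : ℝ → ℝ := fun u => u ^ 3 - (a - u) * (b - u) * (c - u)
  have hm : 0 < m := lt_min ha (lt_min hb hc)
  have hf0 : f 0 < 0 := by simpa [f] using mul_pos (mul_pos ha hb) hc
  have hfm : 0 < f m := by
    simp only [f, m, sub_min_mul_sub_min_mul_sub_min, sub_zero]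
    positivity
  obtain ⟨u, hu, hfu⟩ : (0 : ℝ) ∈ f '' Set.Ioo 0 m :=
    intermediate_value_Ioo hm.le (by fun_prop : Continuous f).continuousOn ⟨hf0, hfm⟩
  refine ⟨u, ⟨hu.1, hu.2, sub_eq_zero.mp hfu⟩, ?_⟩
  rintro v ⟨-, hvm, hv⟩
  refine (pow_three_sub_sub_mul_sub_mul_sub_strictMonoOn a b c).injOn hvm.le hu.2.le ?_
  change f v = f u
  rw [hfu]
  exact sub_eq_zero.mpr hv

theorem yff_parameter_exists_unique (a b c : ℝ)
    (ha : 0 < a) (hb : 0 < b) (hc : 0 < c)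
    (hab : a < b + c) (hbc : b < a + c) (hca : c < a + b) :
    ∃! u : ℝ, 0 < u ∧ u < min a (min b c) ∧
      u ^ 3 = (a - u) * (b - u) * (c - u) :=
  yff_parameter_exists_unique_general a b c ha hb hc
end

section
/- Let a, b, c be positive reals (sides of a triangle) and u a real with 0 < u < min(a,b,c) satisfying u^3 = (a-u)(b-u)(c-u). If u = b/2, then b(ab - 2ac + bc) = 0, hence b = 2ac/(a+c), i.e., b is the harmonic mean of a and c. -/
/-! Substituting `u = b / 2` into the Yff equation gives the identity
`u³ - (a - u)(b - u)(c - u) = b (ab - 2ac + bc) / 4`, so the Yff equation forces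
`ab + bc = 2ac`; for `b ≠ 0` and `a + c ≠ 0` this says `b = 2ac / (a + c)`. -/

theorem mul_harmonic_defect_eq_zero_of_yff_half {a b c u : ℝ}
    (hyff : u ^ 3 = (a - u) * (b - u) * (c - u)) (hub : u = b / 2) :
    b * (a * b - 2 * a * c + b * c) = 0 := by
  subst hub
  linear_combination 4 * hyff

theorem eq_harmonic_mean_of_harmonic_defect_eq_zero {a b c : ℝ} (hac : a + c ≠ 0)
    (h : a * b - 2 * a * c + b * c = 0) : b = 2 * a * c / (a + c) := by
  rw [eq_div_iff hac]
  linear_combination h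

theorem yff_half_b_implies_harmonic_general (a b c u : ℝ)
    (ha : 0 < a) (hb : 0 < b) (hc : 0 < c)
    (hyff : u ^ 3 = (a - u) * (b - u) * (c - u))
    (hub : u = b / 2) :
    b * (a * b - 2 * a * c + b * c) = 0 ∧ b = 2 * a * c / (a + c) := by
  have hdefect := mul_harmonic_defect_eq_zero_of_yff_half hyff hub
  refine ⟨hdefect, eq_harmonic_mean_of_harmonic_defect_eq_zero (by positivity) ?_⟩
  exact (mul_eq_zero.mp hdefect).resolve_left hb.ne'

theorem yff_half_b_implies_harmonic (a b c u : ℝ)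
    (ha : 0 < a) (hb : 0 < b) (hc : 0 < c)
    (hu0 : 0 < u) (hu1 : u < min a (min b c))
    (hyff : u ^ 3 = (a - u) * (b - u) * (c - u))
    (hub : u = b / 2) :
    b * (a * b - 2 * a * c + b * c) = 0 ∧ b = 2 * a * c / (a + c) :=
  yff_half_b_implies_harmonic_general a b c u ha hb hc hyff hub
end

section
/- Let a, b, c be the sides of a triangle and u the Yff parameter satisfying u^3 = (a-u)(b-u)(c-u) with 0 < u < min(a,b,c). If b = 2ac/(a+c) (the triangle is harmonic), then u = b/2. -/
/-! When `b (a + c) = 2 a c`, the Yff cubic `u³ - (a - u)(b - u)(c - u)` has the factor `2u - b`,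
and the complementary quadratic factor is positive for `0 < u < min a c`. -/

lemma two_mul_yff_cubic_eq_of_harmonic {a b c : ℝ} (u : ℝ) (h : b * (a + c) = 2 * a * c) :
    2 * (u ^ 3 - (a - u) * (b - u) * (c - u)) =
      (2 * u - b) * (2 * (a - u) * (c - u) + (a + c) * u) := by
  linear_combination u * h

lemma yff_quadratic_factor_pos {a c u : ℝ} (hu0 : 0 < u) (hua : u < a) (huc : u < c) :
    0 < 2 * (a - u) * (c - u) + (a + c) * u := by
  have hprod : 0 < (a - u) * (c - u) := mul_pos (sub_pos.2 hua) (sub_pos.2 huc)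
  have hlin : 0 < (a + c) * u := mul_pos (by linarith) hu0
  linarith

theorem harmonic_implies_yff_half_b_general (a b c u : ℝ)
    (hu0 : 0 < u) (hu1 : u < min a (min b c))
    (hyff : u ^ 3 = (a - u) * (b - u) * (c - u))
    (hharm : b = 2 * a * c / (a + c)) :
    u = b / 2 := by
  have hua : u < a := hu1.trans_le (min_le_left _ _)
  have huc : u < c := hu1.trans_le ((min_le_right _ _).trans (min_le_right _ _))
  have hac : b * (a + c) = 2 * a * c := by
    rw [hharm, div_mul_cancel₀]
    exact (add_pos (hu0.trans hua) (hu0.trans huc)).ne'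
  have hfactor := two_mul_yff_cubic_eq_of_harmonic u hac
  rw [hyff, sub_self, mul_zero, eq_comm, mul_eq_zero] at hfactor
  rcases hfactor with hroot | hquad
  · linarith
  · exact absurd hquad (yff_quadratic_factor_pos hu0 hua huc).ne'

theorem harmonic_implies_yff_half_b (a b c u : ℝ)
    (ha : 0 < a) (hb : 0 < b) (hc : 0 < c)
    (hu0 : 0 < u) (hu1 : u < min a (min b c))
    (hyff : u ^ 3 = (a - u) * (b - u) * (c - u))
    (hharm : b = 2 * a * c / (a + c)) :
    u = b / 2 :=
  harmonic_implies_yff_half_b_general a b c u hu0 hu1 hyff hharm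
end

section
/- The Yff points Y1 = (u^2 : (a-u)(b-u) : u(b-u)), Y2 = ((a-u)(b-u) : u^2 : u(a-u)) and the centroid X2 = (1:1:1) are collinear if and only if (a - 2u)(b - 2u)(bu - ab + au) = 0. -/
theorem Matrix.det_yff_centroid {R : Type*} [CommRing R] (a b u : R) :
    Matrix.det !![u ^ 2, (a - u) * (b - u), u * (b - u);
        (a - u) * (b - u), u ^ 2, u * (a - u);
        1, 1, 1] = (a - 2 * u) * (b - 2 * u) * (b * u - a * b + a * u) := by
  rw [Matrix.det_fin_three]
  simp only [Matrix.of_apply, Matrix.cons_val', Matrix.cons_val_zero, Matrix.cons_val_one,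
    Matrix.cons_val_two, Matrix.empty_val', Matrix.cons_val_fin_one,
    Matrix.tail_cons, Matrix.vecHead]
  ring

theorem yff_collinear_centroid_general (a b u : ℝ) :
    Matrix.det !![u ^ 2, (a - u) * (b - u), u * (b - u);
        (a - u) * (b - u), u ^ 2, u * (a - u);
        1, 1, 1] = 0 ↔
      (a - 2 * u) * (b - 2 * u) * (b * u - a * b + a * u) = 0 := by
  rw [Matrix.det_yff_centroid]

theorem yff_collinear_centroid (a b c u : ℝ) :
    Matrix.det !![u ^ 2, (a - u) * (b - u), u * (b - u);
        (a - u) * (b - u), u ^ 2, u * (a - u);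
        1, 1, 1] = 0 ↔
      (a - 2 * u) * (b - 2 * u) * (b * u - a * b + a * u) = 0 :=
  yff_collinear_centroid_general a b u
end

section
/- Let P = (p:q:r) be a point in homogeneous barycentric coordinates with respect to triangle ABC with side lengths a, b, c, normalized so p + q + r ≠ 0. Then the reflection of P about line BC has barycentric coordinates (-a^2 p : (b^2 - c^2) p + (p + q) a^2 : (c^2 - b^2) p + (p + r) a^2). -/
open EuclideanGeometry
open scoped RealInnerProductSpace

/-! Reflection in the line `BC` sends `x` to `2 • proj x - x`, where the projection is
`B + t • (C - B)` with `t = ⟪C - B, x - B⟫ / a²`. For `x` with coordinates `(p : q : r)` and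
`σ = p + q + r` this gives `σ t a² = p ⟪C - B, A - B⟫ + r a²`, and the law of cosines
`2 ⟪C - B, A - B⟫ = a² + c² - b²` turns the result into the stated coordinates. -/

theorem EuclideanGeometry.reflection_affineSpan_pair_apply {V P : Type*} [NormedAddCommGroup V]
    [InnerProductSpace ℝ V] [MetricSpace P] [NormedAddTorsor V P] (B C x : P)
    [Nonempty line[ℝ, B, C]] [line[ℝ, B, C].direction.HasOrthogonalProjection] :
    reflection line[ℝ, B, C] x =
      ((2 * (⟪C -ᵥ B, x -ᵥ B⟫ / ‖C -ᵥ B‖ ^ 2)) • (C -ᵥ B) - (x -ᵥ B)) +ᵥ B := by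
  rw [reflection_apply_of_mem _ x (left_mem_affineSpan_pair ℝ B C)]
  simp only [direction_affineSpan, vectorSpan_pair_rev, Submodule.reflection_singleton_apply]
  congr 2
  module

theorem barycentric_reflection_about_BC (A B C : EuclideanSpace ℝ (Fin 2))
    (hABC : AffineIndependent ℝ ![A, B, C])
    (a b c : ℝ) (ha : a = dist B C) (hb : b = dist C A) (hc : c = dist A B)
    (p q r : ℝ) (hpqr : p + q + r ≠ 0) :
    haveI : Nonempty (affineSpan ℝ ({B, C} : Set (EuclideanSpace ℝ (Fin 2)))) :=
      ⟨⟨B, subset_affineSpan ℝ _ (by simp)⟩⟩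
    reflection (affineSpan ℝ ({B, C} : Set (EuclideanSpace ℝ (Fin 2))))
        ((p + q + r)⁻¹ • (p • A + q • B + r • C)) =
      ((-a ^ 2 * p) + ((b ^ 2 - c ^ 2) * p + (p + q) * a ^ 2)
          + ((c ^ 2 - b ^ 2) * p + (p + r) * a ^ 2))⁻¹ •
        ((-a ^ 2 * p) • A + ((b ^ 2 - c ^ 2) * p + (p + q) * a ^ 2) • B
          + ((c ^ 2 - b ^ 2) * p + (p + r) * a ^ 2) • C) := by
  have hBC : B ≠ C := fun h => by
    simpa [h] using hABC.injective.ne (show (1 : Fin 3) ≠ 2 by decide)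
  have hCB : ‖C - B‖ ≠ 0 := norm_ne_zero_iff.2 (sub_ne_zero.2 hBC.symm)
  rw [show (-a ^ 2 * p) + ((b ^ 2 - c ^ 2) * p + (p + q) * a ^ 2)
      + ((c ^ 2 - b ^ 2) * p + (p + r) * a ^ 2) = (p + q + r) * a ^ 2 by ring]
  subst ha hb hc
  have hdisp : (p + q + r)⁻¹ • (p • A + q • B + r • C) - B =
      (p + q + r)⁻¹ • (p • (A - B) + r • (C - B)) := by
    rw [eq_inv_smul_iff₀ hpqr, smul_sub, smul_inv_smul₀ hpqr]
    module
  have hinner : ⟪C - B, (p + q + r)⁻¹ • (p • (A - B) + r • (C - B))⟫ =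
      (p + q + r)⁻¹ * (p * ⟪C - B, A - B⟫ + r * ‖C - B‖ ^ 2) := by
    simp only [inner_smul_right, inner_add_right, real_inner_self_eq_norm_sq]
  have hcos : ‖C - A‖ ^ 2 = ‖C - B‖ ^ 2 - 2 * ⟪C - B, A - B⟫ + ‖A - B‖ ^ 2 := by
    rw [← norm_sub_sq_real, sub_sub_sub_cancel_right]
  rw [reflection_affineSpan_pair_apply]
  simp only [vsub_eq_sub, vadd_eq_add, hdisp, hinner, dist_comm B C, dist_eq_norm, hcos]
  match_scalars <;> field_simp
  all_goals ring
end

section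
/- In a triangle with angle A = 2·(angle B), the side lengths satisfy a^2 = b(b + c). -/
/-!
Write `β = ∠ABC`, so `∠BAC = 2β`. The law of sines with `sin 2β = 2 sin β cos β` gives
`a = 2b cos β`, and the law of cosines at `A` with `cos 2β = 2 cos² β - 1` gives
`a² = (b + c)² - 4bc cos² β = (b + c)² - c a² / b`, that is `(b + c) a² = b (b + c)²`.
-/

open EuclideanGeometry

namespace EuclideanGeometry

variable {V P : Type*} [NormedAddCommGroup V] [InnerProductSpace ℝ V] [MetricSpace P]
  [NormedAddTorsor V P]

theorem dist_eq_two_mul_dist_mul_cos_of_angle_eq_two_mul {A B C : P}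
    (h : ¬Collinear ℝ ({A, B, C} : Set P)) (hangle : ∠ B A C = 2 * ∠ A B C) :
    dist B C = 2 * dist C A * Real.cos (∠ A B C) := by
  have hsin := law_sin A B C
  rw [angle_comm C A B, hangle, Real.sin_two_mul] at hsin
  apply mul_left_cancel₀ (sin_ne_zero_of_not_collinear h)
  linear_combination hsin

theorem dist_sq_eq_of_angle_eq_two_mul {A B C : P} (hangle : ∠ B A C = 2 * ∠ A B C) :
    dist B C ^ 2 = dist C A ^ 2 + dist A B ^ 2 -
      2 * dist C A * dist A B * (2 * Real.cos (∠ A B C) ^ 2 - 1) := by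
  have hcos := law_cos B A C
  rw [hangle, Real.cos_two_mul, dist_comm B A] at hcos
  linear_combination hcos

end EuclideanGeometry

theorem double_angle_side_relation (A B C : EuclideanSpace ℝ (Fin 2))
    (hABC : AffineIndependent ℝ ![A, B, C])
    (hangle : ∠ B A C = 2 * ∠ A B C) :
    dist B C ^ 2 = dist C A * (dist C A + dist A B) := by
  have hnc : ¬Collinear ℝ ({A, B, C} : Set _) := affineIndependent_iff_not_collinear_set.mp hABC
  have hCA : 0 < dist C A := dist_pos.mpr (ne₁₃_of_not_collinear hnc).symm
  have hAB : 0 < dist A B := dist_pos.mpr (ne₁₂_of_not_collinear hnc)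
  have hsine := dist_eq_two_mul_dist_mul_cos_of_angle_eq_two_mul hnc hangle
  have hcosine := dist_sq_eq_of_angle_eq_two_mul hangle
  apply mul_left_cancel₀ (add_pos hCA hAB).ne'
  linear_combination
    dist C A * hcosine + dist A B * (dist B C + 2 * dist C A * Real.cos (∠ A B C)) * hsine
end

section
/- Conversely, if a triangle with sides a, b, c satisfies a^2 = b(b + c), then angle A = 2·(angle B). -/
/-!
By the law of cosines, `a² = b (b + c)` gives `cos B = (b + c) / (2a)` and
`cos A = (c - b) / (2b)`. Then `cos 2B = 2 cos² B - 1 = (b + c)² / (2a²) - 1 = (c - b) / (2b)`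
equals `cos A`; since `cos B > 0` the angle `B` is acute, so `A` and `2B` both lie in `[0, π]`,
where the cosine is injective.
-/

open EuclideanGeometry Real Set

theorem Real.eq_two_mul_of_cos_eq_cos_two_mul {x y : ℝ} (hx : x ∈ Icc 0 π) (hy : y ∈ Icc 0 π)
    (hcos_pos : 0 < cos y) (h : cos x = cos (2 * y)) : x = 2 * y := by
  have hy_lt : y < π / 2 := by
    by_contra! hle
    linarith [cos_nonpos_of_pi_div_two_le_of_le hle (by linarith [hy.2, pi_pos])]
  exact injOn_cos hx ⟨by linarith [hy.1], by linarith⟩ h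

namespace EuclideanGeometry

variable {V P : Type*} [NormedAddCommGroup V] [InnerProductSpace ℝ V] [MetricSpace P]
  [NormedAddTorsor V P] {A B C : P}

theorem cos_angle_eq_of_sq_dist_eq_mul_add (hAB : A ≠ B) (hBC : B ≠ C)
    (h : dist B C ^ 2 = dist C A * (dist C A + dist A B)) :
    cos (∠ A B C) = (dist C A + dist A B) / (2 * dist B C) := by
  have hc : dist A B ≠ 0 := dist_ne_zero.2 hAB
  have ha : dist B C ≠ 0 := dist_ne_zero.2 hBC
  have hlaw := law_cos A B C
  rw [dist_comm A C, dist_comm C B] at hlaw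
  rw [eq_div_iff (by positivity)]
  apply mul_left_cancel₀ hc
  linear_combination hlaw + h

theorem cos_opposite_angle_eq_of_sq_dist_eq_mul_add (hAB : A ≠ B) (hCA : C ≠ A)
    (h : dist B C ^ 2 = dist C A * (dist C A + dist A B)) :
    cos (∠ B A C) = (dist A B - dist C A) / (2 * dist C A) := by
  have hc : dist A B ≠ 0 := dist_ne_zero.2 hAB
  have hb : dist C A ≠ 0 := dist_ne_zero.2 hCA
  have hlaw := law_cos B A C
  rw [dist_comm B A] at hlaw
  rw [eq_div_iff (by positivity)]
  apply mul_left_cancel₀ hc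
  linear_combination hlaw - h

theorem cos_two_mul_angle_eq_of_sq_dist_eq_mul_add (hAB : A ≠ B) (hBC : B ≠ C) (hCA : C ≠ A)
    (h : dist B C ^ 2 = dist C A * (dist C A + dist A B)) :
    cos (2 * ∠ A B C) = (dist A B - dist C A) / (2 * dist C A) := by
  have hb : 0 < dist C A := dist_pos.2 hCA
  have hc : 0 < dist A B := dist_pos.2 hAB
  rw [cos_two_mul, cos_angle_eq_of_sq_dist_eq_mul_add hAB hBC h, div_pow, mul_pow, h]
  field_simp
  ring

end EuclideanGeometry

theorem side_relation_implies_double_angle (A B C : EuclideanSpace ℝ (Fin 2))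
    (hABC : AffineIndependent ℝ ![A, B, C])
    (hside : dist B C ^ 2 = dist C A * (dist C A + dist A B)) :
    ∠ B A C = 2 * ∠ A B C := by
  have hAB : A ≠ B := hABC.injective.ne (by decide : (0 : Fin 3) ≠ 1)
  have hBC : B ≠ C := hABC.injective.ne (by decide : (1 : Fin 3) ≠ 2)
  have hCA : C ≠ A := hABC.injective.ne (by decide : (2 : Fin 3) ≠ 0)
  have hcosB_pos : 0 < cos (∠ A B C) := by
    rw [cos_angle_eq_of_sq_dist_eq_mul_add hAB hBC hside]
    have := dist_pos.2 hCA
    have := dist_pos.2 hBC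
    positivity
  refine eq_two_mul_of_cos_eq_cos_two_mul ⟨angle_nonneg _ _ _, angle_le_pi _ _ _⟩
    ⟨angle_nonneg _ _ _, angle_le_pi _ _ _⟩ hcosB_pos ?_
  rw [cos_opposite_angle_eq_of_sq_dist_eq_mul_add hAB hCA hside,
    cos_two_mul_angle_eq_of_sq_dist_eq_mul_add hAB hBC hCA hside]
end

section
/- Let triangle ABC have sides a, b, c, area K, and circumradius R = abc/(4K). Let u be the Yff parameter (u^3 = (a-u)(b-u)(c-u), 0 < u < min(a,b,c)), and let D on BC, E on CA, F on AB satisfy BD = u, CE = u, AF = u. Then the area of triangle DEF equals u^3/(2R). -/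
/-!
Put `p = u / a`, `q = u / b`, `r = u / c`, so that `D`, `E`, `F` divide `BC`, `CA`, `AB` in these
ratios. Areas of triangles are absolute determinants up to a common constant, and the determinant
of `DEF` is `(1 - p)(1 - q)(1 - r) + pqr` times that of `ABC`. Yff's relation
`u³ = (a - u)(b - u)(c - u)` turns this factor into `2u³ / (abc)`, and `2u³K / (abc) = u³ / (2R)`.
-/

open MeasureTheory

/-- Area of the triangle with the given vertices in the Euclidean plane. -/
noncomputable def triArea (X Y Z : EuclideanSpace ℝ (Fin 2)) : ℝ :=
  (volume (convexHull ℝ ({X, Y, Z} : Set (EuclideanSpace ℝ (Fin 2))))).toReal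

open AffineMap Pointwise

theorem eq_lineMap_of_mem_segment {E : Type*} [NormedAddCommGroup E] [NormedSpace ℝ E]
    {P Q X : E} (hX : X ∈ segment ℝ P Q) :
    X = lineMap P Q (dist P X / dist P Q) := by
  rw [segment_eq_image_lineMap] at hX
  obtain ⟨t, ⟨ht0, -⟩, rfl⟩ := hX
  rcases eq_or_ne P Q with rfl | hPQ
  · simp only [lineMap_same_apply]
  · rw [dist_left_lineMap, Real.norm_of_nonneg ht0, mul_div_cancel_right₀ _ (dist_ne_zero.2 hPQ)]

namespace Module.Basis

variable {R M : Type*} [CommRing R] [AddCommGroup M] [Module R M] (b : Basis (Fin 2) R M)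

theorem det_fin_two (v w : M) :
    b.det ![v, w] = b.repr v 0 * b.repr w 1 - b.repr v 1 * b.repr w 0 := by
  rw [det_apply, Matrix.det_fin_two]
  simp only [toMatrix_apply, Matrix.cons_val_zero, Matrix.cons_val_one]
  ring

theorem det_cevian_triangle (A B C : M) (p q r : R) :
    b.det ![lineMap C A q - lineMap B C p, lineMap A B r - lineMap B C p] =
      ((1 - p) * (1 - q) * (1 - r) + p * q * r) * b.det ![B - A, C - A] := by
  simp only [det_fin_two, lineMap_apply_module, map_sub, map_add, map_smul, Finsupp.coe_sub,
    Finsupp.coe_add, Finsupp.coe_smul, Pi.sub_apply, Pi.add_apply, Pi.smul_apply, smul_eq_mul]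
  ring

end Module.Basis

theorem addHaar_convexHull_triangle {E : Type*} [NormedAddCommGroup E] [NormedSpace ℝ E]
    [MeasurableSpace E] [BorelSpace E] [FiniteDimensional ℝ E] (μ : Measure E)
    [μ.IsAddHaarMeasure] (b : Module.Basis (Fin 2) ℝ E) (X Y Z : E) :
    μ (convexHull ℝ {X, Y, Z}) =
      ENNReal.ofReal |b.det ![Y - X, Z - X]| * μ (convexHull ℝ {0, b 0, b 1}) := by
  set f := b.constr ℝ ![Y - X, Z - X]
  have hvertices : ({X, Y, Z} : Set E) = X +ᵥ f '' {0, b 0, b 1} := by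
    simp [f, Set.image_insert_eq, ← Set.image_vadd]
  have hdet : LinearMap.det f = b.det ![Y - X, Z - X] := by
    rw [← LinearMap.det_toMatrix b, Module.Basis.det_apply]
    exact congrArg Matrix.det (b.toMatrix_eq_toMatrix_constr _).symm
  rw [hvertices, convexHull_vadd, ← f.coe_toAffineMap, ← AffineMap.image_convexHull, measure_vadd,
    f.coe_toAffineMap, Measure.addHaar_image_linearMap, hdet]

-- The area `triArea 0 (b 0) (b 1)` of the reference triangle is never computed: it cancels.
theorem triArea_eq_abs_det_mul (b : Module.Basis (Fin 2) ℝ (EuclideanSpace ℝ (Fin 2)))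
    (X Y Z : EuclideanSpace ℝ (Fin 2)) :
    triArea X Y Z = |b.det ![Y - X, Z - X]| * triArea 0 (b 0) (b 1) := by
  rw [triArea, addHaar_convexHull_triangle volume b, ENNReal.toReal_mul,
    ENNReal.toReal_ofReal (abs_nonneg _), triArea]

theorem cevian_area_ratio_of_yff {a b c u : ℝ} (ha : a ≠ 0) (hb : b ≠ 0) (hc : c ≠ 0)
    (hyff : u ^ 3 = (a - u) * (b - u) * (c - u)) :
    (1 - u / a) * (1 - u / b) * (1 - u / c) + u / a * (u / b) * (u / c) =
      2 * u ^ 3 / (a * b * c) := by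
  field_simp
  linear_combination -hyff

theorem yff_cevian_triangle_area_general (A B C D E F : EuclideanSpace ℝ (Fin 2))
    (a b c u K R : ℝ)
    (ha : a = dist B C) (hb : b = dist C A) (hc : c = dist A B)
    (hK : K = triArea A B C) (hR : R = a * b * c / (4 * K))
    (hu0 : 0 < u) (hu1 : u < min a (min b c))
    (hyff : u ^ 3 = (a - u) * (b - u) * (c - u))
    (hD : D ∈ segment ℝ B C) (hE : E ∈ segment ℝ C A) (hF : F ∈ segment ℝ A B)
    (hBD : dist B D = u) (hCE : dist C E = u) (hAF : dist A F = u) :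
    triArea D E F = u ^ 3 / (2 * R) := by
  obtain ⟨hua, hub, huc⟩ : u < a ∧ u < b ∧ u < c := by simpa only [lt_min_iff] using hu1
  have ha0 : 0 < a := hu0.trans hua
  have hb0 : 0 < b := hu0.trans hub
  have hc0 : 0 < c := hu0.trans huc
  have hD' : D = lineMap B C (u / a) := by rw [eq_lineMap_of_mem_segment hD, hBD, ha]
  have hE' : E = lineMap C A (u / b) := by rw [eq_lineMap_of_mem_segment hE, hCE, hb]
  have hF' : F = lineMap A B (u / c) := by rw [eq_lineMap_of_mem_segment hF, hAF, hc]
  have hDEF : triArea D E F = 2 * u ^ 3 / (a * b * c) * K := by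
    let e := (EuclideanSpace.basisFun (Fin 2) ℝ).toBasis
    rw [hK, triArea_eq_abs_det_mul e D, triArea_eq_abs_det_mul e A, hD', hE', hF',
      e.det_cevian_triangle, cevian_area_ratio_of_yff ha0.ne' hb0.ne' hc0.ne' hyff, abs_mul,
      abs_of_nonneg (by positivity), mul_assoc]
  rw [hDEF, hR, mul_div_assoc', div_div_eq_mul_div]
  ring

theorem yff_cevian_triangle_area (A B C D E F : EuclideanSpace ℝ (Fin 2))
    (hABC : AffineIndependent ℝ ![A, B, C])
    (a b c u K R : ℝ)
    (ha : a = dist B C) (hb : b = dist C A) (hc : c = dist A B)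
    (hK : K = triArea A B C) (hR : R = a * b * c / (4 * K))
    (hu0 : 0 < u) (hu1 : u < min a (min b c))
    (hyff : u ^ 3 = (a - u) * (b - u) * (c - u))
    (hD : D ∈ segment ℝ B C) (hE : E ∈ segment ℝ C A) (hF : F ∈ segment ℝ A B)
    (hBD : dist B D = u) (hCE : dist C E = u) (hAF : dist A F = u) :
    triArea D E F = u ^ 3 / (2 * R) :=
  yff_cevian_triangle_area_general A B C D E F a b c u K R ha hb hc hK hR hu0 hu1 hyff hD hE hF hBD
    hCE hAF
end

section
/- Let a, b, c be sides of a triangle and u the Yff parameter with u^3 = (a-u)(b-u)(c-u), 0 < u < min(a,b,c), and let s = (a+b+c)/2. Then u = s - a if and only if a^2(a - b - c) = bc(b + c - 3a). -/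
/-!
The Yff parameter is a root of `x ↦ x ^ 3 - (a - x) * (b - x) * (c - x)`. For the sides of a
triangle this cubic is strictly increasing (its derivative has negative discriminant), so the Yff
parameter is its only real root, and `u = s - a` holds exactly when `s - a` is a root. Evaluating
the cubic at `s - a` gives half of the difference of the two sides of the stated identity.
-/

def yffCubic (a b c x : ℝ) : ℝ := x ^ 3 - (a - x) * (b - x) * (c - x)

lemma sq_add_sq_add_sq_lt_of_triangle {a b c : ℝ}
    (hab : a < b + c) (hbc : b < a + c) (hca : c < a + b) :
    a ^ 2 + b ^ 2 + c ^ 2 < 2 * (a * b + b * c + c * a) := by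
  have ha : 0 < a := by linarith
  have hb : 0 < b := by linarith
  have hc : 0 < c := by linarith
  nlinarith [mul_lt_mul_of_pos_left hab ha, mul_lt_mul_of_pos_left hbc hb,
    mul_lt_mul_of_pos_left hca hc]

lemma yffCubic_sub_yffCubic (a b c x y : ℝ) :
    yffCubic a b c y - yffCubic a b c x =
      (y - x) * (2 * (x ^ 2 + x * y + y ^ 2) - (a + b + c) * (x + y) + (a * b + b * c + c * a)) := by
  unfold yffCubic
  ring

lemma yffCubic_strictMono {a b c : ℝ} (h : a ^ 2 + b ^ 2 + c ^ 2 < 4 * (a * b + b * c + c * a)) :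
    StrictMono (yffCubic a b c) := by
  intro x y hxy
  have hdivided : 0 < 2 * (x ^ 2 + x * y + y ^ 2) - (a + b + c) * (x + y) + (a * b + b * c + c * a) := by
    nlinarith [sq_nonneg (3 * (x + y) - (a + b + c)), sq_nonneg (x - y)]
  have := yffCubic_sub_yffCubic a b c x y
  nlinarith [mul_pos (sub_pos.mpr hxy) hdivided]

lemma yffCubic_semiperimeter_sub (a b c : ℝ) :
    yffCubic a b c ((a + b + c) / 2 - a) = (b * c * (b + c - 3 * a) - a ^ 2 * (a - b - c)) / 2 := by
  unfold yffCubic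
  ring

theorem yff_nagel_condition_general (a b c u : ℝ)
    (hab : a < b + c) (hbc : b < a + c) (hca : c < a + b)
    (hyff : u ^ 3 = (a - u) * (b - u) * (c - u)) :
    u = (a + b + c) / 2 - a ↔
      a ^ 2 * (a - b - c) = b * c * (b + c - 3 * a) := by
  have hmono : StrictMono (yffCubic a b c) := by
    apply yffCubic_strictMono
    nlinarith [sq_add_sq_add_sq_lt_of_triangle hab hbc hca, sq_nonneg a, sq_nonneg b, sq_nonneg c]
  have hroot : yffCubic a b c u = 0 := sub_eq_zero.mpr hyff
  rw [← hmono.injective.eq_iff, hroot, yffCubic_semiperimeter_sub, eq_comm, div_eq_zero_iff,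
    sub_eq_zero]
  simp only [two_ne_zero, or_false]
  exact eq_comm

theorem yff_nagel_condition (a b c u : ℝ)
    (ha : 0 < a) (hb : 0 < b) (hc : 0 < c)
    (hab : a < b + c) (hbc : b < a + c) (hca : c < a + b)
    (hu0 : 0 < u) (hu1 : u < min a (min b c))
    (hyff : u ^ 3 = (a - u) * (b - u) * (c - u)) :
    u = (a + b + c) / 2 - a ↔
      a ^ 2 * (a - b - c) = b * c * (b + c - 3 * a) :=
  yff_nagel_condition_general a b c u hab hbc hca hyff
end

section
/- In a triangle where the cevian BY1 is a median (so that u = b/2), the point Y1 divides the median BE in the ratio BY1 : Y1E = 2b : (2a - b). -/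
/-!
When `u = b / 2` the Yff weights of `A` and `C` coincide, so `Y1` is the barycentre of `B`
with weight `(a - u)(b - u)` and the midpoint `E` of `AC` with weight `2u(b - u)`. Hence `Y1`
lies on `BE` at parameter `t = 2b / (2a + b)`, and `BY1 : Y1E = t : (1 - t) = 2b : (2a - b)`.
-/

open AffineMap

theorem dist_left_lineMap_div_dist_lineMap_right {𝕜 V P : Type*} [NormedField 𝕜]
    [SeminormedAddCommGroup V] [NormedSpace 𝕜 V] [MetricSpace P] [NormedAddTorsor V P]
    {p₁ p₂ : P} (h : p₁ ≠ p₂) (c : 𝕜) :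
    dist p₁ (lineMap p₁ p₂ c) / dist (lineMap p₁ p₂ c) p₂ = ‖c‖ / ‖1 - c‖ := by
  rw [dist_left_lineMap, dist_lineMap_right, mul_div_mul_right _ _ (dist_ne_zero.mpr h)]

theorem smul_add_smul_add_smul_eq_lineMap_midpoint {k V : Type*} [Field k] [Invertible (2 : k)]
    [AddCommGroup V] [Module k V] (A B C : V) {w v : k} (h : 2 * w + v ≠ 0) :
    (w + v + w)⁻¹ • (w • A + v • B + w • C) =
      lineMap B (midpoint k A C) (2 * w / (2 * w + v)) := by
  have h2 : (2 : k) ≠ 0 := Invertible.ne_zero 2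
  rw [lineMap_apply_module, midpoint_eq_smul_add, invOf_eq_inv,
    show w + v + w = 2 * w + v by ring]
  match_scalars
  · field_simp
  · field_simp
    ring
  · field_simp

theorem ne_midpoint_of_affineIndependent {k V P : Type*} [Field k] [Invertible (2 : k)]
    [AddCommGroup V] [Module k V] [AddTorsor V P] {A B C : P}
    (h : AffineIndependent k ![A, B, C]) : B ≠ midpoint k A C := by
  intro hB
  have hcol : Collinear k {B, A, C} :=
    collinear_insert_of_mem_affineSpan_pair (hB ▸ lineMap_mem_affineSpan_pair _ A C)
  rw [Set.insert_comm] at hcol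
  exact affineIndependent_iff_not_collinear_set.mp h hcol

theorem yff_median_ratio_general (A B C : EuclideanSpace ℝ (Fin 2))
    (hABC : AffineIndependent ℝ ![A, B, C])
    (a b c u : ℝ)
    (hu1 : u < min a (min b c))
    (hmed : u = b / 2) :
    let Y1 : EuclideanSpace ℝ (Fin 2) :=
      (u ^ 2 + (a - u) * (b - u) + u * (b - u))⁻¹ •
        (u ^ 2 • A + ((a - u) * (b - u)) • B + (u * (b - u)) • C)
    let E : EuclideanSpace ℝ (Fin 2) := midpoint ℝ A C
    dist B Y1 / dist Y1 E = 2 * b / (2 * a - b) := by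
  intro Y1 E
  subst hmed
  have hub : b / 2 < b := hu1.trans_le ((min_le_right _ _).trans (min_le_left _ _))
  have hua : b / 2 < a := hu1.trans_le (min_le_left _ _)
  have hb0 : 0 < b := by linarith
  have hsum : 0 < 2 * a + b := by linarith
  have hdiff : 0 < 2 * a - b := by linarith
  have hY1 : Y1 = lineMap B E (2 * b / (2 * a + b)) := by
    have hweights :
        2 * (b / 2 * (b - b / 2)) + (a - b / 2) * (b - b / 2) = b * (2 * a + b) / 4 := by
      ring
    have ht : 2 * (b / 2 * (b - b / 2)) / (b * (2 * a + b) / 4) = 2 * b / (2 * a + b) := by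
      field_simp
      ring
    simp only [Y1, E]
    rw [show (b / 2) ^ 2 = b / 2 * (b - b / 2) by ring,
      smul_add_smul_add_smul_eq_lineMap_midpoint _ _ _ (hweights ▸ by positivity), hweights, ht]
  have hcompl : 1 - 2 * b / (2 * a + b) = (2 * a - b) / (2 * a + b) := by
    field_simp
    ring
  rw [hY1, dist_left_lineMap_div_dist_lineMap_right (ne_midpoint_of_affineIndependent hABC),
    hcompl, Real.norm_of_nonneg (by positivity), Real.norm_of_nonneg (by positivity),
    div_div_div_cancel_right₀ hsum.ne']

theorem yff_median_ratio (A B C : EuclideanSpace ℝ (Fin 2))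
    (hABC : AffineIndependent ℝ ![A, B, C])
    (a b c u : ℝ)
    (ha : a = dist B C) (hb : b = dist C A) (hc : c = dist A B)
    (hu0 : 0 < u) (hu1 : u < min a (min b c))
    (hyff : u ^ 3 = (a - u) * (b - u) * (c - u))
    (hmed : u = b / 2) :
    let Y1 : EuclideanSpace ℝ (Fin 2) :=
      (u ^ 2 + (a - u) * (b - u) + u * (b - u))⁻¹ •
        (u ^ 2 • A + ((a - u) * (b - u)) • B + (u * (b - u)) • C)
    let E : EuclideanSpace ℝ (Fin 2) := midpoint ℝ A C
    dist B Y1 / dist Y1 E = 2 * b / (2 * a - b) :=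
  yff_median_ratio_general A B C hABC a b c u hu1 hmed
end
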